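/- Let T(z) = −((z − 0.4)/(1 − 0.4·z))². Then T is a finite Blaschke product of degree 2 satisfying: inf_{z∈𝕋} |T'(z)| = 6/7, attained at z = −1; T(−1) = −1; and |T'(−1)| = 6/7 < 1, so z = −1 is an attracting fixed point of T on 𝕋 and T is not uniformly expanding on 𝕋. -/

import Mathlib

open MeasureTheory Filter Set

noncomputable section

/-- The unit circle 𝕋 = {z ∈ ℂ : |z| = 1}. -/
def unitCircle : Set ℂ := {z : ℂ | ‖z‖ = 1}

/-- The open unit disc D = {z ∈ ℂ : |z| < 1}. -/
def unitDisc : Set ℂ := {z : ℂ | ‖z‖ < 1}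

/-- Normalized arc-length (Haar probability) measure on the unit circle, realised as a
measure on ℂ: the pushforward of Lebesgue measure on [0,1) under t ↦ e^{2πit}. -/
def mCircle : Measure ℂ :=
  Measure.map (fun t : ℝ => Complex.exp (2 * (Real.pi : ℂ) * Complex.I * (t : ℂ)))
    (volume.restrict (Set.Ico (0 : ℝ) 1))

/-- The Poisson kernel P_x(z) = (1 − |x|²)/|z − x|². -/
def poissonK (x z : ℂ) : ℝ := (1 - ‖x‖ ^ 2) / ‖z - x‖ ^ 2

/-- `T` is a finite Blaschke product of degree `n ≥ 1`. -/
def IsBlaschke (n : ℕ) (T : ℂ → ℂ) : Prop :=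
  1 ≤ n ∧ ∃ (θ₀ : ℂ) (a : Fin n → ℂ), ‖θ₀‖ = 1 ∧ (∀ i, ‖a i‖ < 1) ∧
    ∀ z : ℂ, T z = θ₀ * ∏ i, (z - a i) / (1 - (starRingEnd ℂ) (a i) * z)

/-- inf_{z ∈ 𝕋} |T'(z)|. -/
def derivInf (T : ℂ → ℂ) : ℝ := ⨅ z : unitCircle, ‖deriv T (z : ℂ)‖

/-- The backward cocycle iterate T_{σ^{-n}ω}^{(n)} = T_{σ^{-1}ω} ∘ ⋯ ∘ T_{σ^{-n}ω}. -/
def backIter {Ω : Type*} (σinv : Ω → Ω) (T : Ω → ℂ → ℂ) : ℕ → Ω → ℂ → ℂ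
  | 0, _, z => z
  | n + 1, ω, z => backIter σinv T n ω (T (σinv^[n + 1] ω) z)

/-!
Write `T = -φ²` with `φ(z) = (z - a)/(1 - a z)`, `a = 2/5`. On the circle `|φ| = 1` and
`|φ'(z)| = (1 - a²)/|1 - a z|²`, so `|T'(z)| = 2(1 - a²)/|1 - a z|²`. Since `|1 - a z| ≤ 1 + a`
with equality exactly at `z = -1`, the infimum of `|T'|` on the circle is attained there and
equals `2(1 - a)/(1 + a) = 6/7`.
-/

open ComplexConjugate

def blaschkeFactor (a z : ℂ) : ℂ := (z - a) / (1 - conj a * z)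

theorem isBlaschke_const_mul_blaschkeFactor_pow {n : ℕ} (hn : 1 ≤ n) {θ a : ℂ} (hθ : ‖θ‖ = 1)
    (ha : ‖a‖ < 1) : IsBlaschke n (fun z => θ * blaschkeFactor a z ^ n) :=
  ⟨hn, θ, fun _ => a, hθ, fun _ => ha, fun z => by simp [blaschkeFactor, div_pow]⟩

section UnitCircle

variable {a z : ℂ}

theorem norm_sub_eq_norm_one_sub_conj_mul (hz : ‖z‖ = 1) : ‖z - a‖ = ‖1 - conj a * z‖ := by
  have hzz : z * conj z = 1 := by
    rw [Complex.mul_conj', hz]; norm_num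
  calc ‖z - a‖ = ‖z * conj (1 - conj a * z)‖ := by
        congr 1; simp only [map_sub, map_one, map_mul, Complex.conj_conj]
        linear_combination a * hzz
    _ = ‖1 - conj a * z‖ := by rw [norm_mul, hz, one_mul, Complex.norm_conj]

theorem one_sub_conj_mul_ne_zero (ha : ‖a‖ < 1) (hz : ‖z‖ ≤ 1) : 1 - conj a * z ≠ 0 := by
  refine sub_ne_zero.mpr fun h => ?_
  have : ‖conj a * z‖ < 1 := by
    rw [norm_mul, Complex.norm_conj]
    nlinarith [norm_nonneg a, norm_nonneg z]
  simp [← h] at this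

theorem norm_blaschkeFactor_of_norm_eq_one (ha : ‖a‖ < 1) (hz : ‖z‖ = 1) :
    ‖blaschkeFactor a z‖ = 1 := by
  rw [blaschkeFactor, norm_div, norm_sub_eq_norm_one_sub_conj_mul hz,
    div_self (norm_ne_zero_iff.mpr (one_sub_conj_mul_ne_zero ha hz.le))]

theorem hasDerivAt_blaschkeFactor (h : 1 - conj a * z ≠ 0) :
    HasDerivAt (blaschkeFactor a) (((1 - ‖a‖ ^ 2 : ℝ) : ℂ) / (1 - conj a * z) ^ 2) z := by
  have hnum : HasDerivAt (fun w => w - a) 1 z := (hasDerivAt_id z).sub_const a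
  have hden : HasDerivAt (fun w => 1 - conj a * w) (-conj a) z := by
    simpa using ((hasDerivAt_id z).const_mul (conj a)).const_sub 1
  refine (hnum.div hden h).congr_deriv ?_
  push_cast
  rw [← Complex.conj_mul']
  ring

theorem norm_deriv_const_mul_blaschkeFactor_pow (n : ℕ) {θ : ℂ} (hθ : ‖θ‖ = 1) (ha : ‖a‖ < 1)
    (hz : ‖z‖ = 1) :
    ‖deriv (fun w => θ * blaschkeFactor a w ^ n) z‖ = n * (1 - ‖a‖ ^ 2) / ‖1 - conj a * z‖ ^ 2 := by
  have hden := one_sub_conj_mul_ne_zero ha hz.le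
  have hderiv : HasDerivAt (fun w => θ * blaschkeFactor a w ^ n) _ z :=
    ((hasDerivAt_blaschkeFactor hden).fun_pow n).const_mul θ
  rw [hderiv.deriv]
  simp only [norm_mul, norm_div, norm_pow, hθ, norm_blaschkeFactor_of_norm_eq_one ha hz,
    Complex.norm_natCast, Complex.norm_real, Real.norm_eq_abs, one_pow, one_mul, mul_one]
  rw [abs_of_nonneg (by nlinarith [norm_nonneg a]), mul_div_assoc]

theorem le_norm_deriv_const_mul_blaschkeFactor_pow (n : ℕ) {θ : ℂ} (hθ : ‖θ‖ = 1) (ha : ‖a‖ < 1)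
    (hz : ‖z‖ = 1) :
    n * (1 - ‖a‖) / (1 + ‖a‖) ≤ ‖deriv (fun w => θ * blaschkeFactor a w ^ n) z‖ := by
  have hden : 0 < ‖1 - conj a * z‖ := norm_pos_iff.mpr (one_sub_conj_mul_ne_zero ha hz.le)
  have hle : ‖1 - conj a * z‖ ≤ 1 + ‖a‖ := by
    simpa [hz] using norm_sub_le (1 : ℂ) (conj a * z)
  have hfactor : (n : ℝ) * (1 - ‖a‖) / (1 + ‖a‖) = n * (1 - ‖a‖ ^ 2) / (1 + ‖a‖) ^ 2 := by
    field_simp; ring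
  rw [norm_deriv_const_mul_blaschkeFactor_pow n hθ ha hz, hfactor]
  gcongr
  exact mul_nonneg n.cast_nonneg (by nlinarith [norm_nonneg a])

end UnitCircle

theorem derivInf_eq_of_isMinOn {T : ℂ → ℂ} {z₀ : ℂ} (hz₀ : z₀ ∈ unitCircle)
    (hmin : IsMinOn (fun z => ‖deriv T z‖) unitCircle z₀) : derivInf T = ‖deriv T z₀‖ :=
  have : Nonempty unitCircle := ⟨⟨z₀, hz₀⟩⟩
  le_antisymm (ciInf_le ⟨0, by rintro _ ⟨w, rfl⟩; positivity⟩ (⟨z₀, hz₀⟩ : unitCircle))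
    (le_ciInf fun z => hmin z.2)

/-- the map T(z) = −((z−0.4)/(1−0.4z))² is a degree-2 Blaschke product with
inf_{z∈𝕋}|T'| = 6/7 attained at z = −1, which is an attracting fixed point on 𝕋; in
particular T is not uniformly expanding on 𝕋. -/
theorem example_attracting_blaschke
    (T : ℂ → ℂ) (hT : ∀ z : ℂ, T z = -((z - 0.4) / (1 - 0.4 * z)) ^ 2) :
    IsBlaschke 2 T ∧
    derivInf T = 6 / 7 ∧
    ‖deriv T (-1)‖ = 6 / 7 ∧
    T (-1) = -1 ∧
    ‖deriv T (-1)‖ < 1 ∧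
    ¬ (1 < derivInf T) := by
  have hconj : conj (2 / 5 : ℂ) = 2 / 5 := by simp [map_ofNat]
  have hT' : T = fun z => -1 * blaschkeFactor (2 / 5) z ^ 2 := by
    funext z; rw [hT, blaschkeFactor, hconj]; norm_num
  have ha : ‖(2 / 5 : ℂ)‖ < 1 := by norm_num
  have hneg_one : ‖(-1 : ℂ)‖ = 1 := by simp
  have hval : ‖deriv T (-1)‖ = 6 / 7 := by
    rw [hT', norm_deriv_const_mul_blaschkeFactor_pow 2 hneg_one ha hneg_one, hconj]; norm_num
  have hmin : IsMinOn (fun z => ‖deriv T z‖) unitCircle (-1) := fun z hz => by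
    have := hT' ▸ le_norm_deriv_const_mul_blaschkeFactor_pow 2 hneg_one ha hz
    norm_num at this
    simpa [hval] using this
  have hinf : derivInf T = 6 / 7 := by rw [derivInf_eq_of_isMinOn hneg_one hmin, hval]
  refine ⟨hT' ▸ isBlaschke_const_mul_blaschkeFactor_pow one_le_two hneg_one ha, hinf, hval, ?_,
    by norm_num [hval], by norm_num [hinf]⟩
  rw [hT]; norm_num
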